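/- Let (w*, b*, u*) be a P-stationary point with parameter γ > 0 and associated multiplier λ* ∈ ℝ^m, and define the index set T* = {i : 0 < u*_i − γλ*_i ≤ √(2γC)}. Then every L_{0/1} support vector lies on a support hyperplane: for every i ∈ T*, y_i(⟨w*, x_i⟩ + b*) = 1, i.e., ⟨w*, x_i⟩ + b* = ±1. -/

import Mathlib

open Finset

noncomputable def l01norm {m : ℕ} (v : Fin m → ℝ) : ℕ :=
  (Finset.univ.filter fun i => 0 < v i).card

/-- `(w, b, u)` is a P-stationary point with parameter `γ > 0` and multiplier
`lam` of the problem `min (1/2)‖w‖² + C‖u₊‖₀ s.t. u + Aw + by = 1`. -/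
def IsPStationary {m n : ℕ} (A : Matrix (Fin m) (Fin n) ℝ) (y : Fin m → ℝ)
    (C γ : ℝ) (w : Fin n → ℝ) (b : ℝ) (u : Fin m → ℝ) (lam : Fin m → ℝ) : Prop :=
  (∀ j, w j + ∑ i, A i j * lam i = 0) ∧
  (∑ i, y i * lam i = 0) ∧
  (∀ i, u i + A.mulVec w i + b * y i = 1) ∧
  (∀ i, (0 < u i - γ * lam i ∧ u i - γ * lam i ≤ Real.sqrt (2 * γ * C)) →
      u i = 0) ∧
  (∀ i, ¬(0 < u i - γ * lam i ∧ u i - γ * lam i ≤ Real.sqrt (2 * γ * C)) →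
      u i = u i - γ * lam i)

open Matrix

theorem Matrix.mulVec_apply_of_rows_eq_smul {R ι κ : Type*} [CommSemiring R] [Fintype κ]
    {A : Matrix ι κ R} {y : ι → R} {x : ι → κ → R} (hA : ∀ i j, A i j = y i * x i j)
    (w : κ → R) (i : ι) : (A *ᵥ w) i = y i * ∑ j, w j * x i j := by
  simp only [mulVec, dotProduct, hA, Finset.mul_sum]
  exact Finset.sum_congr rfl fun j _ => by ring

theorem eq_one_or_eq_neg_one_of_sign_mul_eq_one {R : Type*} [Ring R] {s t : R}
    (hs : s = 1 ∨ s = -1) (h : s * t = 1) : t = 1 ∨ t = -1 := by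
  rcases hs with rfl | rfl
  · exact Or.inl (by simpa using h)
  · exact Or.inr (by simpa [neg_eq_iff_eq_neg] using h)

theorem IsPStationary.mulVec_add_eq_one {m n : ℕ} {A : Matrix (Fin m) (Fin n) ℝ}
    {y : Fin m → ℝ} {C γ : ℝ} {w : Fin n → ℝ} {b : ℝ} {u lam : Fin m → ℝ}
    (hstat : IsPStationary A y C γ w b u lam) {i : Fin m}
    (hi : 0 < u i - γ * lam i ∧ u i - γ * lam i ≤ Real.sqrt (2 * γ * C)) :
    (A *ᵥ w) i + b * y i = 1 := by
  obtain ⟨-, -, hfeas, hzero, -⟩ := hstat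
  simpa [hzero i hi] using hfeas i

theorem PStationary_support_vectors_on_hyperplanes_general {m n : ℕ}
    (x : Fin m → Fin n → ℝ) (y : Fin m → ℝ) (hy : ∀ i, y i = 1 ∨ y i = -1)
    (A : Matrix (Fin m) (Fin n) ℝ) (hA : ∀ i j, A i j = y i * x i j)
    (C : ℝ) (γ : ℝ)
    (wstar : Fin n → ℝ) (bstar : ℝ) (ustar : Fin m → ℝ) (lam : Fin m → ℝ)
    (hstat : IsPStationary A y C γ wstar bstar ustar lam)
    (Tstar : Set (Fin m))
    (hT : Tstar = {i | 0 < ustar i - γ * lam i ∧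
        ustar i - γ * lam i ≤ Real.sqrt (2 * γ * C)}) :
    ∀ i ∈ Tstar,
      y i * ((∑ j, wstar j * x i j) + bstar) = 1 ∧
      ((∑ j, wstar j * x i j) + bstar = 1 ∨ (∑ j, wstar j * x i j) + bstar = -1) := by
  intro i hi
  subst hT
  have hfeas := hstat.mulVec_add_eq_one hi
  rw [Matrix.mulVec_apply_of_rows_eq_smul hA] at hfeas
  have hmargin : y i * ((∑ j, wstar j * x i j) + bstar) = 1 := by linear_combination hfeas
  exact ⟨hmargin, eq_one_or_eq_neg_one_of_sign_mul_eq_one (hy i) hmargin⟩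

/-- every `L_{0/1}` support vector lies on a support hyperplane:
for `i ∈ T*`, `y_i(⟨w*, x_i⟩ + b*) = 1`, i.e. `⟨w*, x_i⟩ + b* = ±1`. -/
theorem PStationary_support_vectors_on_hyperplanes {m n : ℕ}
    (x : Fin m → Fin n → ℝ) (y : Fin m → ℝ) (hy : ∀ i, y i = 1 ∨ y i = -1)
    (A : Matrix (Fin m) (Fin n) ℝ) (hA : ∀ i j, A i j = y i * x i j)
    (C : ℝ) (hC : 0 < C) (γ : ℝ) (hγ : 0 < γ)
    (wstar : Fin n → ℝ) (bstar : ℝ) (ustar : Fin m → ℝ) (lam : Fin m → ℝ)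
    (hstat : IsPStationary A y C γ wstar bstar ustar lam)
    (Tstar : Set (Fin m))
    (hT : Tstar = {i | 0 < ustar i - γ * lam i ∧
        ustar i - γ * lam i ≤ Real.sqrt (2 * γ * C)}) :
    ∀ i ∈ Tstar,
      y i * ((∑ j, wstar j * x i j) + bstar) = 1 ∧
      ((∑ j, wstar j * x i j) + bstar = 1 ∨ (∑ j, wstar j * x i j) + bstar = -1) :=
  PStationary_support_vectors_on_hyperplanes_general x y hy A hA C γ wstar bstar ustar lam hstat
    Tstar hT
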